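/- Let f = (f₁, f₂): I² → I² be a bijection whose inverse f⁻¹ is Lipschitz continuous with Lipschitz constant K. Then there exists C ∈ (0, ∞) such that for all y, y′ ∈ I and j ∈ {1,2}, the Hausdorff distance between the level-sets satisfies d_Haus(L_{f_j}(y), L_{f_j}(y′)) ≤ C |y − y′|. -/

import Mathlib

noncomputable section

abbrev E2 := EuclideanSpace ℝ (Fin 2)

def Isq : Set E2 := {x | x 0 ∈ Set.Icc (-1:ℝ) 1 ∧ x 1 ∈ Set.Icc (-1:ℝ) 1}

def levelSet (f : E2 → E2) (j : Fin 2) (y : ℝ) : Set E2 :=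
  {x ∈ Isq | f x j = y}

lemma add_single_mem_Isq {u : E2} (hu : u ∈ Isq) {j : Fin 2} {a : ℝ}
    (ha : u j + a ∈ Set.Icc (-1:ℝ) 1) : u + EuclideanSpace.single j a ∈ Isq := by
  fin_cases j <;> simp_all [Isq]

/-- The witness is the preimage of `f x` with its `j`-th coordinate moved from `y` to `y'`. -/
lemma exists_mem_levelSet_dist_le {f g : E2 → E2} {K : ℝ}
    (hmaps : Set.MapsTo f Isq Isq) (hsurj : Set.SurjOn f Isq Isq)
    (hgf : ∀ x ∈ Isq, g (f x) = x)
    (hgLip : ∀ u ∈ Isq, ∀ v ∈ Isq, ‖g u - g v‖ ≤ K * ‖u - v‖)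
    {j : Fin 2} {y y' : ℝ} (hy' : y' ∈ Set.Icc (-1:ℝ) 1) {x : E2} (hx : x ∈ levelSet f j y) :
    ∃ x' ∈ levelSet f j y', dist x x' ≤ K * |y - y'| := by
  obtain ⟨hxI, hxj⟩ := hx
  set u' := f x + EuclideanSpace.single j (y' - y)
  have hu'j : u' j = y' := by simp [u', hxj]
  have hu'I : u' ∈ Isq := add_single_mem_Isq (hmaps hxI) (by rwa [hxj, add_sub_cancel])
  obtain ⟨x', hx'I, hfx'⟩ := hsurj hu'I
  refine ⟨x', ⟨hx'I, hfx' ▸ hu'j⟩, ?_⟩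
  calc dist x x' = ‖g (f x) - g u'‖ := by rw [dist_eq_norm, hgf x hxI, ← hfx', hgf x' hx'I]
    _ ≤ K * ‖f x - u'‖ := hgLip _ (hmaps hxI) _ hu'I
    _ = K * |y - y'| := by
      rw [sub_add_cancel_left, norm_neg, PiLp.norm_single, Real.norm_eq_abs, abs_sub_comm]

theorem stmt_4 (f g : E2 → E2) (K : ℝ)
    (hf : Set.BijOn f Isq Isq)
    (hgf : ∀ x ∈ Isq, g (f x) = x)
    (hgLip : ∀ u ∈ Isq, ∀ v ∈ Isq, ‖g u - g v‖ ≤ K * ‖u - v‖) :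
    ∃ C > (0:ℝ),
    ∀ y ∈ Set.Icc (-1:ℝ) 1, ∀ y' ∈ Set.Icc (-1:ℝ) 1, ∀ j : Fin 2,
      Metric.hausdorffDist (levelSet f j y) (levelSet f j y') ≤ C * |y - y'| := by
  have hstep {j y y'} (hy' : y' ∈ Set.Icc (-1:ℝ) 1) (x) (hx : x ∈ levelSet f j y) :
      ∃ x' ∈ levelSet f j y', dist x x' ≤ (|K| + 1) * |y - y'| := by
    obtain ⟨x', hx', hdist⟩ := exists_mem_levelSet_dist_le hf.mapsTo hf.surjOn hgf hgLip hy' hx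
    exact ⟨x', hx', hdist.trans (by gcongr; linarith [le_abs_self K])⟩
  refine ⟨|K| + 1, by positivity, fun y hy y' hy' j => ?_⟩
  refine Metric.hausdorffDist_le_of_mem_dist (by positivity) (hstep hy') fun x hx => ?_
  simpa only [abs_sub_comm y'] using hstep hy x hx
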